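/- Let λ, μ be C¹ and φ be C² on an open subset of (0,1)×ℝ satisfying the wave equation (W). For t ∈ (0,1) set A₁ = (1/8)(−φ̇ + φ/(t log t) + φ′e^{μ−λ})² and A₂ = (1/8)(−φ̇ + φ/(t log t) − φ′e^{μ−λ})². Then (∂_t + e^{μ−λ}∂_r)A₁ = −(1/(4t))(1 + 1/log t)[(−φ̇ + φ/(t log t))² + φ′²e^{2μ−2λ}] + (1/(2t))(1 + 1/log t)φ′²e^{2μ−2λ} + (1/4)(λ̇ − μ̇ + 1/t)(φ̇ − φ′e^{μ−λ})(−φ̇ + φ/(t log t) + φ′e^{μ−λ}), and (∂_t − e^{μ−λ}∂_r)A₂ = −(1/(4t))(1 + 1/log t)[(−φ̇ + φ/(t log t))² + φ′²e^{2μ−2λ}] + (1/(2t))(1 + 1/log t)φ′²e^{2μ−2λ} + (1/4)(λ̇ − μ̇ + 1/t)(φ̇ + φ′e^{μ−λ})(−φ̇ + φ/(t log t) − φ′e^{μ−λ}). -/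

import Mathlib

open Real MeasureTheory Set Filter

noncomputable section

/-- Partial derivative with respect to the first (time) variable. -/
def pt (u : ℝ → ℝ → ℝ) (t r : ℝ) : ℝ := deriv (fun s => u s r) t

/-- Partial derivative with respect to the second (space) variable. -/
def pr (u : ℝ → ℝ → ℝ) (t r : ℝ) : ℝ := deriv (fun s => u t s) r

/-- Second partial derivative in time. -/
def ptt (u : ℝ → ℝ → ℝ) (t r : ℝ) : ℝ := deriv (fun s => pt u s r) t

/-- Second partial derivative in space. -/
def prr (u : ℝ → ℝ → ℝ) (t r : ℝ) : ℝ := deriv (fun s => pr u t s) r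

/-- Vlasov contribution to the energy density. -/
def vRho (f : ℝ → ℝ → ℝ → ℝ → ℝ) (t r : ℝ) : ℝ :=
  (π / t ^ 2) * ∫ w : ℝ, ∫ F in Ioi (0 : ℝ), Real.sqrt (1 + w ^ 2 + F / t ^ 2) * f t r w F

/-- Vlasov contribution to the radial pressure. -/
def vP (f : ℝ → ℝ → ℝ → ℝ → ℝ) (t r : ℝ) : ℝ :=
  (π / t ^ 2) * ∫ w : ℝ, ∫ F in Ioi (0 : ℝ),
    (w ^ 2 / Real.sqrt (1 + w ^ 2 + F / t ^ 2)) * f t r w F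

/-- Vlasov contribution to the momentum density. -/
def vJ (f : ℝ → ℝ → ℝ → ℝ → ℝ) (t r : ℝ) : ℝ :=
  (π / t ^ 2) * ∫ w : ℝ, ∫ F in Ioi (0 : ℝ), w * f t r w F

/-- Energy density ρ of the Einstein-Vlasov-scalar field system. -/
def rho (f : ℝ → ℝ → ℝ → ℝ → ℝ) (lam mu phi : ℝ → ℝ → ℝ) (t r : ℝ) : ℝ :=
  vRho f t r + (1 / 2) * (Real.exp (-(2 * mu t r)) * (pt phi t r) ^ 2
    + Real.exp (-(2 * lam t r)) * (pr phi t r) ^ 2)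

/-- Radial pressure p of the Einstein-Vlasov-scalar field system. -/
def pres (f : ℝ → ℝ → ℝ → ℝ → ℝ) (lam mu phi : ℝ → ℝ → ℝ) (t r : ℝ) : ℝ :=
  vP f t r + (1 / 2) * (Real.exp (-(2 * mu t r)) * (pt phi t r) ^ 2
    + Real.exp (-(2 * lam t r)) * (pr phi t r) ^ 2)

/-- Momentum density j of the Einstein-Vlasov-scalar field system. -/
def mom (f : ℝ → ℝ → ℝ → ℝ → ℝ) (lam mu phi : ℝ → ℝ → ℝ) (t r : ℝ) : ℝ :=
  vJ f t r - Real.exp (-(lam t r + mu t r)) * pt phi t r * pr phi t r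

/-- A regular solution of the surface-symmetric Einstein-Vlasov-scalar field system
with curvature parameter `k` on the time interval `I ⊆ (0,∞)`. -/
structure IsRegularSolution (k : ℝ) (f : ℝ → ℝ → ℝ → ℝ → ℝ) (lam mu phi : ℝ → ℝ → ℝ)
    (I : Set ℝ) : Prop where
  f_contDiff : ContDiffOn ℝ 1 (fun q : ℝ × ℝ × ℝ × ℝ => f q.1 q.2.1 q.2.2.1 q.2.2.2)
    {q : ℝ × ℝ × ℝ × ℝ | q.1 ∈ I ∧ 0 ≤ q.2.2.2}
  f_nonneg : ∀ t ∈ I, ∀ (r w F : ℝ), 0 ≤ f t r w F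
  f_periodic : ∀ (t r w F : ℝ), f t (r + 1) w F = f t r w F
  supp_bounded : ∀ a ∈ I, ∀ b ∈ I, ∃ C : ℝ, ∀ t ∈ Icc a b, ∀ (r w F : ℝ),
    f t r w F ≠ 0 → |w| ≤ C ∧ F ≤ C
  lam_contDiff : ContDiffOn ℝ 1 (fun q : ℝ × ℝ => lam q.1 q.2) (I ×ˢ (univ : Set ℝ))
  mu_contDiff : ContDiffOn ℝ 2 (fun q : ℝ × ℝ => mu q.1 q.2) (I ×ˢ (univ : Set ℝ))
  phi_contDiff : ContDiffOn ℝ 2 (fun q : ℝ × ℝ => phi q.1 q.2) (I ×ˢ (univ : Set ℝ))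
  lam_periodic : ∀ (t r : ℝ), lam t (r + 1) = lam t r
  mu_periodic : ∀ (t r : ℝ), mu t (r + 1) = mu t r
  phi_periodic : ∀ (t r : ℝ), phi t (r + 1) = phi t r
  /-- (V): the Vlasov equation. -/
  eqV : ∀ t ∈ I, ∀ (r w F : ℝ), 0 ≤ F →
    deriv (fun s => f s r w F) t
      + (Real.exp (mu t r - lam t r) * w / Real.sqrt (1 + w ^ 2 + F / t ^ 2))
          * deriv (fun s => f t s w F) r
      - (pt lam t r * w + Real.exp (mu t r - lam t r) * pr mu t r
          * Real.sqrt (1 + w ^ 2 + F / t ^ 2)) * deriv (fun s => f t r s F) w = 0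
  /-- (E1). -/
  eqE1 : ∀ t ∈ I, ∀ r : ℝ,
    Real.exp (-(2 * mu t r)) * (2 * t * pt lam t r + 1) + k
      = 8 * π * t ^ 2 * rho f lam mu phi t r
  /-- (E2). -/
  eqE2 : ∀ t ∈ I, ∀ r : ℝ,
    Real.exp (-(2 * mu t r)) * (2 * t * pt mu t r - 1) - k
      = 8 * π * t ^ 2 * pres f lam mu phi t r
  /-- (E3). -/
  eqE3 : ∀ t ∈ I, ∀ r : ℝ,
    pr mu t r = -(4 * π * t) * Real.exp (lam t r + mu t r) * mom f lam mu phi t r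
  /-- (W): the wave equation for the scalar field. -/
  eqW : ∀ t ∈ I, ∀ r : ℝ,
    Real.exp (-(2 * lam t r)) * prr phi t r - Real.exp (-(2 * mu t r)) * ptt phi t r
      - Real.exp (-(2 * mu t r)) * (pt lam t r - pt mu t r + 2 / t) * pt phi t r
      - Real.exp (-(2 * lam t r)) * (pr lam t r - pr mu t r) * pr phi t r = 0

/-- Admissible initial data at `t = 1` for the surface-symmetric
Einstein-Vlasov-scalar field system. -/
structure IsInitialData (f0 : ℝ → ℝ → ℝ → ℝ) (lam0 mu0 phi0 psi : ℝ → ℝ) : Prop where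
  f0_contDiff : ContDiffOn ℝ 1 (fun q : ℝ × ℝ × ℝ => f0 q.1 q.2.1 q.2.2)
    {q : ℝ × ℝ × ℝ | 0 ≤ q.2.2}
  f0_nonneg : ∀ (r w F : ℝ), 0 ≤ f0 r w F
  f0_periodic : ∀ (r w F : ℝ), f0 (r + 1) w F = f0 r w F
  f0_supp : ∃ C : ℝ, ∀ (r w F : ℝ), f0 r w F ≠ 0 → |w| ≤ C ∧ F ≤ C
  lam0_C1 : ContDiff ℝ 1 lam0
  psi_C1 : ContDiff ℝ 1 psi
  mu0_C2 : ContDiff ℝ 2 mu0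
  phi0_C2 : ContDiff ℝ 2 phi0
  lam0_periodic : ∀ r : ℝ, lam0 (r + 1) = lam0 r
  mu0_periodic : ∀ r : ℝ, mu0 (r + 1) = mu0 r
  phi0_periodic : ∀ r : ℝ, phi0 (r + 1) = phi0 r
  psi_periodic : ∀ r : ℝ, psi (r + 1) = psi r
  /-- The constraint (E3) holds at `t = 1`. -/
  constraint : ∀ r : ℝ, deriv mu0 r = -(4 * π) * Real.exp (lam0 r + mu0 r) *
    (π * (∫ w : ℝ, ∫ F in Ioi (0 : ℝ), w * f0 r w F)
      - Real.exp (-(lam0 r + mu0 r)) * psi r * deriv phi0 r)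

/-- A solution attains the initial data `(f0, lam0, mu0, phi0, psi)` at `t = 1`. -/
def AttainsData (f : ℝ → ℝ → ℝ → ℝ → ℝ) (lam mu phi : ℝ → ℝ → ℝ)
    (f0 : ℝ → ℝ → ℝ → ℝ) (lam0 mu0 phi0 psi : ℝ → ℝ) : Prop :=
  (∀ (r w F : ℝ), f 1 r w F = f0 r w F) ∧ (∀ r : ℝ, lam 1 r = lam0 r) ∧
    (∀ r : ℝ, mu 1 r = mu0 r) ∧ (∀ r : ℝ, phi 1 r = phi0 r) ∧
    (∀ r : ℝ, pt phi 1 r = psi r)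

/-- A left-maximal regular solution on `(T,1]` attaining the given data at `t = 1`:
it admits no extension to a regular solution on `(T',1]` with `0 ≤ T' < T`. -/
def IsLeftMaximalSolution (k : ℝ) (f : ℝ → ℝ → ℝ → ℝ → ℝ) (lam mu phi : ℝ → ℝ → ℝ)
    (T : ℝ) (f0 : ℝ → ℝ → ℝ → ℝ) (lam0 mu0 phi0 psi : ℝ → ℝ) : Prop :=
  IsRegularSolution k f lam mu phi (Ioc T 1) ∧
  AttainsData f lam mu phi f0 lam0 mu0 phi0 psi ∧
  ∀ T' : ℝ, 0 ≤ T' → T' < T →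
    ¬ ∃ (f' : ℝ → ℝ → ℝ → ℝ → ℝ) (lam' mu' phi' : ℝ → ℝ → ℝ),
      IsRegularSolution k f' lam' mu' phi' (Ioc T' 1) ∧
      AttainsData f' lam' mu' phi' f0 lam0 mu0 phi0 psi ∧
      (∀ t ∈ Ioc T 1, ∀ (r w F : ℝ), f' t r w F = f t r w F) ∧
      (∀ t ∈ Ioc T 1, ∀ r : ℝ, lam' t r = lam t r ∧ mu' t r = mu t r ∧ phi' t r = phi t r)
/-!
Write `A = Z² / 8` with `Z = −φ̇ + φ/(t log t) + σ φ′e^{μ−λ}`, `σ = ±1`, so that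
`(∂_t + σ e^{μ−λ} ∂_r) A = Z/4 · (∂_t + σ e^{μ−λ} ∂_r) Z`. Differentiating `Z` along the null
direction produces `φ̈`, the mixed derivative twice with opposite signs (they cancel by symmetry of
second derivatives) and `σ² e^{2(μ−λ)} φ″`. Eliminating `φ̈` with (W) cancels `φ″` together with
the spatial derivatives of `λ` and `μ`, and what is left is the stated first-order expression.
-/

open Topology

section PartialDerivatives

variable {u : ℝ → ℝ → ℝ} {t r : ℝ}

lemma HasFDerivAt.hasDerivAt_slice_left {u' : ℝ × ℝ →L[ℝ] ℝ}
    (hu : HasFDerivAt (fun q : ℝ × ℝ => u q.1 q.2) u' (t, r)) :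
    HasDerivAt (fun s => u s r) (u' (1, 0)) t :=
  hu.comp_hasDerivAt (f := fun s => (s, r)) t ((hasDerivAt_id' t).prodMk (hasDerivAt_const t r))

lemma HasFDerivAt.hasDerivAt_slice_right {u' : ℝ × ℝ →L[ℝ] ℝ}
    (hu : HasFDerivAt (fun q : ℝ × ℝ => u q.1 q.2) u' (t, r)) :
    HasDerivAt (fun s => u t s) (u' (0, 1)) r :=
  hu.comp_hasDerivAt (f := fun s => (t, s)) r ((hasDerivAt_const r t).prodMk (hasDerivAt_id' r))

lemma pt_eq_fderiv (hu : DifferentiableAt ℝ (fun q : ℝ × ℝ => u q.1 q.2) (t, r)) :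
    pt u t r = fderiv ℝ (fun q : ℝ × ℝ => u q.1 q.2) (t, r) (1, 0) :=
  hu.hasFDerivAt.hasDerivAt_slice_left.deriv

lemma pr_eq_fderiv (hu : DifferentiableAt ℝ (fun q : ℝ × ℝ => u q.1 q.2) (t, r)) :
    pr u t r = fderiv ℝ (fun q : ℝ × ℝ => u q.1 q.2) (t, r) (0, 1) :=
  hu.hasFDerivAt.hasDerivAt_slice_right.deriv

lemma hasDerivAt_pt (hu : DifferentiableAt ℝ (fun q : ℝ × ℝ => u q.1 q.2) (t, r)) :
    HasDerivAt (fun s => u s r) (pt u t r) t :=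
  pt_eq_fderiv hu ▸ hu.hasFDerivAt.hasDerivAt_slice_left

lemma hasDerivAt_pr (hu : DifferentiableAt ℝ (fun q : ℝ × ℝ => u q.1 q.2) (t, r)) :
    HasDerivAt (fun s => u t s) (pr u t r) r :=
  pr_eq_fderiv hu ▸ hu.hasFDerivAt.hasDerivAt_slice_right

variable {U : Set (ℝ × ℝ)}

lemma ContDiffOn.contDiffOn_pt {n : WithTop ℕ∞}
    (hu : ContDiffOn ℝ (n + 1) (fun q : ℝ × ℝ => u q.1 q.2) U) (hU : IsOpen U) :
    ContDiffOn ℝ n (fun q : ℝ × ℝ => pt u q.1 q.2) U :=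
  ((hu.fderiv_of_isOpen hU le_rfl).clm_apply contDiffOn_const).congr fun q hq =>
    pt_eq_fderiv ((hu.contDiffAt (hU.mem_nhds hq)).differentiableAt (by simp))

lemma ContDiffOn.contDiffOn_pr {n : WithTop ℕ∞}
    (hu : ContDiffOn ℝ (n + 1) (fun q : ℝ × ℝ => u q.1 q.2) U) (hU : IsOpen U) :
    ContDiffOn ℝ n (fun q : ℝ × ℝ => pr u q.1 q.2) U :=
  ((hu.fderiv_of_isOpen hU le_rfl).clm_apply contDiffOn_const).congr fun q hq =>
    pr_eq_fderiv ((hu.contDiffAt (hU.mem_nhds hq)).differentiableAt (by simp))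

lemma pt_pr_eq_pr_pt (hu : ContDiffOn ℝ 2 (fun q : ℝ × ℝ => u q.1 q.2) U) (hU : IsOpen U)
    (hq : (t, r) ∈ U) : pt (pr u) t r = pr (pt u) t r := by
  set F := fun q : ℝ × ℝ => u q.1 q.2
  have hF : ContDiffAt ℝ 2 F (t, r) := hu.contDiffAt (hU.mem_nhds hq)
  have hD : HasFDerivAt (fderiv ℝ F) (fderiv ℝ (fderiv ℝ F) (t, r)) (t, r) :=
    ((hF.fderiv_right (m := 1) le_rfl).differentiableAt one_ne_zero).hasFDerivAt
  have hpr :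
      (fun q : ℝ × ℝ => pr u q.1 q.2) =ᶠ[𝓝 (t, r)] fun q => fderiv ℝ F q (0, 1) := by
    filter_upwards [hU.mem_nhds hq] with q hq'
    exact pr_eq_fderiv ((hu.contDiffAt (hU.mem_nhds hq')).differentiableAt (by simp))
  have hpt :
      (fun q : ℝ × ℝ => pt u q.1 q.2) =ᶠ[𝓝 (t, r)] fun q => fderiv ℝ F q (1, 0) := by
    filter_upwards [hU.mem_nhds hq] with q hq'
    exact pt_eq_fderiv ((hu.contDiffAt (hU.mem_nhds hq')).differentiableAt (by simp))
  rw [pt, pr,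
    (hpr.hasFDerivAt_iff.2 (hD.clm_apply (hasFDerivAt_const _ _))).hasDerivAt_slice_left.deriv,
    (hpt.hasFDerivAt_iff.2 (hD.clm_apply (hasFDerivAt_const _ _))).hasDerivAt_slice_right.deriv]
  simpa using hF.isSymmSndFDerivAt (by simp) (1, 0) (0, 1)

end PartialDerivatives

lemma ptt_eq_of_wave {l m a b c11 c22 Lt Mt Lr Mr t : ℝ}
    (h : exp (-(2 * l)) * c22 - exp (-(2 * m)) * c11 - exp (-(2 * m)) * (Lt - Mt + 2 / t) * a
      - exp (-(2 * l)) * (Lr - Mr) * b = 0) :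
    c11 = exp (m - l) ^ 2 * (c22 - (Lr - Mr) * b) - (Lt - Mt + 2 / t) * a := by
  have hexp : exp (-(2 * l)) = exp (-(2 * m)) * exp (m - l) ^ 2 := by
    rw [sq, ← exp_add, ← exp_add]; ring_nf
  apply mul_left_cancel₀ (exp_ne_zero (-(2 * m)))
  linear_combination (-1 : ℝ) * h + (c22 - (Lr - Mr) * b) * hexp

def nullVar (σ : ℝ) (lam mu phi : ℝ → ℝ → ℝ) (t r : ℝ) : ℝ :=
  -(pt phi t r) + phi t r / (t * log t) + σ * (pr phi t r * exp (mu t r - lam t r))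

-- `A₁ = nullEnergy 1` and `A₂ = nullEnergy (-1)`.
def nullEnergy (σ : ℝ) (lam mu phi : ℝ → ℝ → ℝ) (t r : ℝ) : ℝ :=
  1 / 8 * nullVar σ lam mu phi t r ^ 2

theorem pt_add_mul_pr_nullEnergy {U : Set (ℝ × ℝ)} (hU : IsOpen U)
    {lam mu phi : ℝ → ℝ → ℝ}
    (hlam : ContDiffOn ℝ 1 (fun q : ℝ × ℝ => lam q.1 q.2) U)
    (hmu : ContDiffOn ℝ 1 (fun q : ℝ × ℝ => mu q.1 q.2) U)
    (hphi : ContDiffOn ℝ 2 (fun q : ℝ × ℝ => phi q.1 q.2) U)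
    {t r σ : ℝ} (hq : (t, r) ∈ U) (ht : t ≠ 0) (hlog : log t ≠ 0) (hσ : σ ^ 2 = 1)
    (hW : exp (-(2 * lam t r)) * prr phi t r - exp (-(2 * mu t r)) * ptt phi t r
        - exp (-(2 * mu t r)) * (pt lam t r - pt mu t r + 2 / t) * pt phi t r
        - exp (-(2 * lam t r)) * (pr lam t r - pr mu t r) * pr phi t r = 0) :
    pt (nullEnergy σ lam mu phi) t r
        + σ * exp (mu t r - lam t r) * pr (nullEnergy σ lam mu phi) t r
      = -(1 / (4 * t)) * (1 + 1 / log t) * ((-(pt phi t r) + phi t r / (t * log t)) ^ 2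
            + pr phi t r ^ 2 * exp (2 * mu t r - 2 * lam t r))
        + 1 / (2 * t) * (1 + 1 / log t) * pr phi t r ^ 2 * exp (2 * mu t r - 2 * lam t r)
        + 1 / 4 * (pt lam t r - pt mu t r + 1 / t)
          * (pt phi t r - σ * (pr phi t r * exp (mu t r - lam t r)))
          * nullVar σ lam mu phi t r := by
  have hdiff : ∀ {n : WithTop ℕ∞} {u : ℝ → ℝ → ℝ}, n ≠ 0 →
      ContDiffOn ℝ n (fun q : ℝ × ℝ => u q.1 q.2) U →
      DifferentiableAt ℝ (fun q : ℝ × ℝ => u q.1 q.2) (t, r) :=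
    fun hn hu => (hu.contDiffAt (hU.mem_nhds hq)).differentiableAt hn
  have hφ := hdiff two_ne_zero hphi
  have hφt := hdiff one_ne_zero (hphi.contDiffOn_pt (n := 1) hU)
  have hφr := hdiff one_ne_zero (hphi.contDiffOn_pr (n := 1) hU)
  have hE_t := ((hasDerivAt_pt (hdiff one_ne_zero hmu)).sub
    (hasDerivAt_pt (hdiff one_ne_zero hlam))).exp
  have hE_r := ((hasDerivAt_pr (hdiff one_ne_zero hmu)).sub
    (hasDerivAt_pr (hdiff one_ne_zero hlam))).exp
  have htlog : HasDerivAt (fun s => s * log s) (log t + 1) t := by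
    have h := (hasDerivAt_id' t).fun_mul (hasDerivAt_log ht)
    rwa [mul_inv_cancel₀ ht, one_mul] at h
  set E := exp (mu t r - lam t r) with hE
  have hZ_t : HasDerivAt (fun s => nullVar σ lam mu phi s r)
      (-pt (pt phi) t r + (pt phi t r * (t * log t) - phi t r * (log t + 1)) / (t * log t) ^ 2
        + σ * (pt (pr phi) t r * E + pr phi t r * (E * (pt mu t r - pt lam t r)))) t :=
    ((hasDerivAt_pt hφt).neg.add ((hasDerivAt_pt hφ).div htlog (mul_ne_zero ht hlog))).add
      (((hasDerivAt_pt hφr).mul hE_t).const_mul σ)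
  have hZ_r : HasDerivAt (fun s => nullVar σ lam mu phi t s)
      (-pr (pt phi) t r + pr phi t r / (t * log t)
        + σ * (pr (pr phi) t r * E + pr phi t r * (E * (pr mu t r - pr lam t r)))) r :=
    ((hasDerivAt_pr hφt).neg.add ((hasDerivAt_pr hφ).div_const (t * log t))).add
      (((hasDerivAt_pr hφr).mul hE_r).const_mul σ)
  have hwave : pt (pt phi) t r
      = E ^ 2 * (pr (pr phi) t r - (pr lam t r - pr mu t r) * pr phi t r)
        - (pt lam t r - pt mu t r + 2 / t) * pt phi t r :=
    ptt_eq_of_wave hW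
  have hE2 : exp (2 * mu t r - 2 * lam t r) = E ^ 2 := by
    rw [hE, ← exp_nat_mul]; ring_nf
  rw [show pt (nullEnergy σ lam mu phi) t r = _ from ((hZ_t.pow 2).const_mul (1 / 8)).deriv,
    show pr (nullEnergy σ lam mu phi) t r = _ from ((hZ_r.pow 2).const_mul (1 / 8)).deriv,
    hwave, pt_pr_eq_pr_pt hphi hU hq, hE2]
  simp only [nullVar, ← hE, pow_one, Nat.cast_ofNat, Nat.add_one_sub_one]
  linear_combination (norm := skip) (1 / 4 * (-pt phi t r + phi t r / (t * log t)
      + σ * (pr phi t r * E)) * E ^ 2 * (pr (pr phi) t r - pr phi t r * (pr lam t r - pr mu t r))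
    + 1 / (4 * t) * (1 + 1 / log t) * pr phi t r ^ 2 * E ^ 2) * hσ
  field_simp
  ring

/-- Lemma 3.1: identities for the null derivatives of
`A₁ = (1/8)(−φ̇ + φ/(t log t) + φ′e^{μ−λ})²` and
`A₂ = (1/8)(−φ̇ + φ/(t log t) − φ′e^{μ−λ})²` on an open subset of `(0,1) × ℝ`
where the wave equation (W) holds. -/
theorem stmt6 (U : Set (ℝ × ℝ)) (hU : IsOpen U)
    (hUsub : ∀ q ∈ U, 0 < q.1 ∧ q.1 < 1)
    (lam mu phi : ℝ → ℝ → ℝ)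
    (hlam : ContDiffOn ℝ 1 (fun q : ℝ × ℝ => lam q.1 q.2) U)
    (hmu : ContDiffOn ℝ 1 (fun q : ℝ × ℝ => mu q.1 q.2) U)
    (hphi : ContDiffOn ℝ 2 (fun q : ℝ × ℝ => phi q.1 q.2) U)
    (hW : ∀ q ∈ U,
      Real.exp (-(2 * lam q.1 q.2)) * prr phi q.1 q.2
        - Real.exp (-(2 * mu q.1 q.2)) * ptt phi q.1 q.2
        - Real.exp (-(2 * mu q.1 q.2)) * (pt lam q.1 q.2 - pt mu q.1 q.2 + 2 / q.1)
            * pt phi q.1 q.2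
        - Real.exp (-(2 * lam q.1 q.2)) * (pr lam q.1 q.2 - pr mu q.1 q.2)
            * pr phi q.1 q.2 = 0) :
    let A1 : ℝ → ℝ → ℝ := fun t r => (1 / 8) * (-(pt phi t r)
      + phi t r / (t * Real.log t) + pr phi t r * Real.exp (mu t r - lam t r)) ^ 2
    let A2 : ℝ → ℝ → ℝ := fun t r => (1 / 8) * (-(pt phi t r)
      + phi t r / (t * Real.log t) - pr phi t r * Real.exp (mu t r - lam t r)) ^ 2
    ∀ q ∈ U,
      (pt A1 q.1 q.2 + Real.exp (mu q.1 q.2 - lam q.1 q.2) * pr A1 q.1 q.2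
        = -(1 / (4 * q.1)) * (1 + 1 / Real.log q.1) *
            ((-(pt phi q.1 q.2) + phi q.1 q.2 / (q.1 * Real.log q.1)) ^ 2
              + (pr phi q.1 q.2) ^ 2 * Real.exp (2 * mu q.1 q.2 - 2 * lam q.1 q.2))
          + (1 / (2 * q.1)) * (1 + 1 / Real.log q.1) * (pr phi q.1 q.2) ^ 2
              * Real.exp (2 * mu q.1 q.2 - 2 * lam q.1 q.2)
          + (1 / 4) * (pt lam q.1 q.2 - pt mu q.1 q.2 + 1 / q.1)
              * (pt phi q.1 q.2 - pr phi q.1 q.2 * Real.exp (mu q.1 q.2 - lam q.1 q.2))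
              * (-(pt phi q.1 q.2) + phi q.1 q.2 / (q.1 * Real.log q.1)
                  + pr phi q.1 q.2 * Real.exp (mu q.1 q.2 - lam q.1 q.2))) ∧
      (pt A2 q.1 q.2 - Real.exp (mu q.1 q.2 - lam q.1 q.2) * pr A2 q.1 q.2
        = -(1 / (4 * q.1)) * (1 + 1 / Real.log q.1) *
            ((-(pt phi q.1 q.2) + phi q.1 q.2 / (q.1 * Real.log q.1)) ^ 2
              + (pr phi q.1 q.2) ^ 2 * Real.exp (2 * mu q.1 q.2 - 2 * lam q.1 q.2))
          + (1 / (2 * q.1)) * (1 + 1 / Real.log q.1) * (pr phi q.1 q.2) ^ 2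
              * Real.exp (2 * mu q.1 q.2 - 2 * lam q.1 q.2)
          + (1 / 4) * (pt lam q.1 q.2 - pt mu q.1 q.2 + 1 / q.1)
              * (pt phi q.1 q.2 + pr phi q.1 q.2 * Real.exp (mu q.1 q.2 - lam q.1 q.2))
              * (-(pt phi q.1 q.2) + phi q.1 q.2 / (q.1 * Real.log q.1)
                  - pr phi q.1 q.2 * Real.exp (mu q.1 q.2 - lam q.1 q.2))) := by
  intro A1 A2 q hq
  obtain ⟨ht0, ht1⟩ := hUsub q hq
  have hlog : log q.1 ≠ 0 := (log_neg ht0 ht1).ne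
  have hA1 : A1 = nullEnergy 1 lam mu phi := by
    funext t r; simp only [A1, nullEnergy, nullVar, one_mul]
  have hA2 : A2 = nullEnergy (-1) lam mu phi := by
    funext t r; simp only [A2, nullEnergy, nullVar, neg_one_mul, ← sub_eq_add_neg]
  have h1 := pt_add_mul_pr_nullEnergy hU hlam hmu hphi hq ht0.ne' hlog (one_pow 2) (hW q hq)
  have h2 := pt_add_mul_pr_nullEnergy hU hlam hmu hphi hq ht0.ne' hlog neg_one_sq (hW q hq)
  rw [hA1, hA2]
  simp only [nullVar] at h1 h2
  constructor
  · linear_combination h1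
  · linear_combination h2
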